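/- For a harmonic function u on R^{n+1}_+ given as the Poisson integral u(x̲, x₀) = (P_{x₀} * f)(x̲) of f ∈ L^p(R^n), 1 ≤ p ≤ ∞, the nontangential maximal function u*(x̲) = sup_{|y̲-x̲| < α x₀} |u(y̲, x₀)| satisfies u*(x̲) ≤ A · M(f)(x̲) for a constant A depending only on n and α, where M is the Hardy–Littlewood maximal function. -/

import Mathlib

/-!
Inside the cone `‖y - x‖ < α x₀` one has `x₀² + ‖x - z‖² ≤ (2 + 2α²)(x₀² + ‖y - z‖²)`, hence
`P_{x₀}(y - z) ≤ (2 + 2α²)^{(n+1)/2} P_{x₀}(x - z)`, and it suffices to bound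
`∫ P_{x₀}(x - z) |f z| dz`. On the `k`-th dyadic shell around `x` at scale `x₀` the kernel is at
most `2^{n+1} 2^{-k} / (σₙ (2ᵏ x₀)ⁿ)`, i.e. `2^{-k}` times a dimensional constant over the volume of
`B(x, 2ᵏ x₀)`; so the shell contributes at most that multiple of `M f(x)`, and the geometric
series sums. The estimate is carried out for lower Lebesgue integrals, which are subadditive
over the countable cover by shells for arbitrary integrands.
-/

open Real MeasureTheory

noncomputable def sigma (n : ℕ) : ℝ :=
  π ^ (((n : ℝ) + 1) / 2) / Real.Gamma (((n : ℝ) + 1) / 2)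

/-- Poisson kernel of the upper half-space. -/
noncomputable def P (n : ℕ) (x₀ : ℝ) (x : EuclideanSpace ℝ (Fin n)) : ℝ :=
  (1 / sigma n) * x₀ / (x₀ ^ 2 + ‖x‖ ^ 2) ^ (((n : ℝ) + 1) / 2)

/-- The Hardy–Littlewood maximal function (with values in [0,∞]). -/
noncomputable def HLmax {n : ℕ} (f : EuclideanSpace ℝ (Fin n) → ℝ)
    (x : EuclideanSpace ℝ (Fin n)) : ENNReal :=
  ⨆ (r : ℝ) (_ : 0 < r),
    (volume (Metric.ball x r))⁻¹ * ∫⁻ z in Metric.ball x r, ENNReal.ofReal |f z|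

open Metric
open scoped ENNReal

section DyadicShell

variable {X : Type*} [PseudoMetricSpace X]

/-- For `r ≥ 0`, shell `0` is the ball `B(x, r)` and shell `k + 1` is
`B(x, 2ᵏ⁺¹ r) \ B(x, 2ᵏ r)`. -/
noncomputable def dyadicShell (x : X) (r : ℝ) : ℕ → Set X :=
  disjointed fun k => ball x (2 ^ k * r)

lemma dyadicShell_subset_ball (x : X) (r : ℝ) (k : ℕ) :
    dyadicShell x r k ⊆ ball x (2 ^ k * r) :=
  disjointed_subset _ k

lemma measurableSet_dyadicShell [MeasurableSpace X] [OpensMeasurableSpace X]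
    (x : X) (r : ℝ) (k : ℕ) : MeasurableSet (dyadicShell x r k) :=
  MeasurableSet.disjointed (fun _ => measurableSet_ball) k

lemma iUnion_dyadicShell (x : X) {r : ℝ} (hr : 0 < r) : ⋃ k, dyadicShell x r k = Set.univ := by
  rw [dyadicShell, iUnion_disjointed, Set.eq_univ_iff_forall]
  intro z
  obtain ⟨k, hk⟩ := pow_unbounded_of_one_lt (dist z x / r) one_lt_two
  exact Set.mem_iUnion.2 ⟨k, mem_ball.2 ((div_lt_iff₀ hr).1 hk)⟩

lemma pow_mul_le_two_mul_max_of_mem_dyadicShell {x z : X} {r : ℝ} (hr : 0 ≤ r) {k : ℕ}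
    (hz : z ∈ dyadicShell x r k) : 2 ^ k * r ≤ 2 * max r (dist z x) := by
  cases k with
  | zero => rw [pow_zero, one_mul]; linarith [le_max_left r (dist z x)]
  | succ j =>
    have hmono : Monotone fun k : ℕ => ball x (2 ^ k * r) := fun i j hij =>
      ball_subset_ball (by gcongr; exact one_le_two)
    rw [dyadicShell, ← Order.succ_eq_add_one, hmono.disjointed_succ (not_isMax j)] at hz
    have hj : 2 ^ j * r ≤ dist z x := not_lt.1 hz.2
    rw [pow_succ]
    linarith [le_max_right r (dist z x)]

end DyadicShell

section Maximal

variable {n : ℕ}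

lemma average_ball_le_HLmax (f : EuclideanSpace ℝ (Fin n) → ℝ) (x : EuclideanSpace ℝ (Fin n))
    {r : ℝ} (hr : 0 < r) :
    (volume (ball x r))⁻¹ * ∫⁻ z in ball x r, ENNReal.ofReal |f z| ≤ HLmax f x :=
  le_iSup₂ (f := fun r (_ : 0 < r) =>
    (volume (ball x r))⁻¹ * ∫⁻ z in ball x r, ENNReal.ofReal |f z|) r hr

lemma lintegral_mul_le_HLmax_of_dyadicShell_bound (f : EuclideanSpace ℝ (Fin n) → ℝ)
    (x : EuclideanSpace ℝ (Fin n)) {r : ℝ} (hr : 0 < r) (φ : EuclideanSpace ℝ (Fin n) → ℝ≥0∞)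
    {C : ℝ≥0∞} (hC : C ≠ ∞)
    (hφ : ∀ k, ∀ z ∈ dyadicShell x r k, φ z * volume (ball x (2 ^ k * r)) ≤ C * 2⁻¹ ^ k) :
    ∫⁻ z, φ z * ENNReal.ofReal |f z| ≤ 2 * C * HLmax f x := by
  have hshell : ∀ k, ∫⁻ z in dyadicShell x r k, φ z * ENNReal.ofReal |f z| ≤
      C * 2⁻¹ ^ k * HLmax f x := by
    intro k
    set B := ball x (2 ^ k * r)
    have hB : 0 < 2 ^ k * r := by positivity
    have hB0 : volume B ≠ 0 := (measure_ball_pos volume x hB).ne'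
    have hc : C * 2⁻¹ ^ k / volume B ≠ ∞ :=
      ENNReal.div_ne_top (ENNReal.mul_ne_top hC (by simp)) hB0
    calc ∫⁻ z in dyadicShell x r k, φ z * ENNReal.ofReal |f z|
        ≤ ∫⁻ z in dyadicShell x r k, C * 2⁻¹ ^ k / volume B * ENNReal.ofReal |f z| := by
          refine setLIntegral_mono' (measurableSet_dyadicShell x r k) fun z hz => ?_
          gcongr
          exact (ENNReal.le_div_iff_mul_le (.inl hB0) (.inl measure_ball_lt_top.ne)).2
            (hφ k z hz)
      _ ≤ ∫⁻ z in B, C * 2⁻¹ ^ k / volume B * ENNReal.ofReal |f z| :=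
          lintegral_mono_set (dyadicShell_subset_ball x r k)
      _ = C * 2⁻¹ ^ k * ((volume B)⁻¹ * ∫⁻ z in B, ENNReal.ofReal |f z|) := by
          rw [lintegral_const_mul' _ _ hc, div_eq_mul_inv, mul_assoc]
      _ ≤ C * 2⁻¹ ^ k * HLmax f x := by gcongr; exact average_ball_le_HLmax f x hB
  calc ∫⁻ z, φ z * ENNReal.ofReal |f z|
      = ∫⁻ z in ⋃ k, dyadicShell x r k, φ z * ENNReal.ofReal |f z| := by
        rw [iUnion_dyadicShell x hr, setLIntegral_univ]
    _ ≤ ∑' k, ∫⁻ z in dyadicShell x r k, φ z * ENNReal.ofReal |f z| := lintegral_iUnion_le _ _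
    _ ≤ ∑' k : ℕ, C * 2⁻¹ ^ k * HLmax f x := ENNReal.tsum_le_tsum hshell
    _ = 2 * C * HLmax f x := by
        rw [ENNReal.tsum_mul_right, ENNReal.tsum_mul_left, ENNReal.tsum_geometric,
          ENNReal.one_sub_inv_two, inv_inv, mul_comm C]

end Maximal

lemma sigma_pos (n : ℕ) : 0 < sigma n :=
  div_pos (rpow_pos_of_pos pi_pos _) (Gamma_pos_of_pos (by positivity))

lemma P_nonneg (n : ℕ) {x₀ : ℝ} (hx₀ : 0 ≤ x₀) (w : EuclideanSpace ℝ (Fin n)) :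
    0 ≤ P n x₀ w := by
  have := sigma_pos n
  unfold P
  positivity

lemma P_le_of_sq_le (n : ℕ) {x₀ r : ℝ} (hx₀ : 0 ≤ x₀) (hr : 0 < r)
    {w : EuclideanSpace ℝ (Fin n)} (h : r ^ 2 ≤ x₀ ^ 2 + ‖w‖ ^ 2) :
    P n x₀ w ≤ 1 / sigma n * x₀ / r ^ (n + 1) := by
  have := sigma_pos n
  have hr' : r ^ (n + 1) ≤ (x₀ ^ 2 + ‖w‖ ^ 2) ^ (((n : ℝ) + 1) / 2) :=
    calc r ^ (n + 1) = (r ^ 2) ^ (((n : ℝ) + 1) / 2) := by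
          rw [← rpow_natCast, ← rpow_natCast r 2, ← rpow_mul hr.le]; push_cast; ring_nf
      _ ≤ _ := rpow_le_rpow (by positivity) h (by positivity)
  unfold P
  gcongr

lemma sq_add_norm_sub_sq_le {E : Type*} [SeminormedAddCommGroup E] (x₀ α : ℝ) {x y : E}
    (hxy : ‖y - x‖ ≤ α * x₀) (z : E) :
    x₀ ^ 2 + ‖x - z‖ ^ 2 ≤ (2 + 2 * α ^ 2) * (x₀ ^ 2 + ‖y - z‖ ^ 2) := by
  have h : ‖x - z‖ ≤ α * x₀ + ‖y - z‖ := by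
    have := norm_sub_le_norm_sub_add_norm_sub x y z
    rw [norm_sub_rev x y] at this
    linarith
  nlinarith [norm_nonneg (x - z), norm_nonneg (y - z), sq_nonneg (α * x₀ - ‖y - z‖)]

lemma P_sub_le_mul_P_sub (n : ℕ) {x₀ : ℝ} (hx₀ : 0 < x₀) (α : ℝ)
    {x y : EuclideanSpace ℝ (Fin n)} (hxy : ‖y - x‖ ≤ α * x₀) (z : EuclideanSpace ℝ (Fin n)) :
    P n x₀ (y - z) ≤ (2 + 2 * α ^ 2) ^ (((n : ℝ) + 1) / 2) * P n x₀ (x - z) := by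
  have := sigma_pos n
  have hD : (x₀ ^ 2 + ‖x - z‖ ^ 2) ^ (((n : ℝ) + 1) / 2) ≤
      (2 + 2 * α ^ 2) ^ (((n : ℝ) + 1) / 2) * (x₀ ^ 2 + ‖y - z‖ ^ 2) ^ (((n : ℝ) + 1) / 2) := by
    rw [← mul_rpow (by positivity) (by positivity)]
    exact rpow_le_rpow (by positivity) (sq_add_norm_sub_sq_le x₀ α hxy z) (by positivity)
  unfold P
  rw [mul_div_assoc', div_le_div_iff₀ (by positivity) (by positivity)]
  calc 1 / sigma n * x₀ * (x₀ ^ 2 + ‖x - z‖ ^ 2) ^ (((n : ℝ) + 1) / 2)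
      ≤ 1 / sigma n * x₀ * ((2 + 2 * α ^ 2) ^ (((n : ℝ) + 1) / 2) *
          (x₀ ^ 2 + ‖y - z‖ ^ 2) ^ (((n : ℝ) + 1) / 2)) := by gcongr
    _ = _ := by ring

lemma P_mul_pow_le_of_mem_dyadicShell (n : ℕ) {x₀ : ℝ} (hx₀ : 0 < x₀)
    {x z : EuclideanSpace ℝ (Fin n)} {k : ℕ} (hz : z ∈ dyadicShell x x₀ k) :
    P n x₀ (x - z) * (2 ^ k * x₀) ^ n ≤ 2 ^ (n + 1) / sigma n * 2⁻¹ ^ k := by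
  have := sigma_pos n
  have hρ : 0 < 2 ^ k * x₀ / 2 := by positivity
  have hshell := pow_mul_le_two_mul_max_of_mem_dyadicShell hx₀.le hz
  rw [dist_eq_norm, norm_sub_rev] at hshell
  have hsq : (2 ^ k * x₀ / 2) ^ 2 ≤ x₀ ^ 2 + ‖x - z‖ ^ 2 := by
    rcases le_total x₀ ‖x - z‖ with h | h
    · rw [max_eq_right h] at hshell
      nlinarith [sq_nonneg x₀]
    · rw [max_eq_left h] at hshell
      nlinarith [sq_nonneg ‖x - z‖]
  calc P n x₀ (x - z) * (2 ^ k * x₀) ^ n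
      ≤ 1 / sigma n * x₀ / (2 ^ k * x₀ / 2) ^ (n + 1) * (2 ^ k * x₀) ^ n := by
        gcongr; exact P_le_of_sq_le n hx₀.le hρ hsq
    _ = 2 ^ (n + 1) / sigma n * 2⁻¹ ^ k := by
        rw [div_pow, pow_succ (2 ^ k * x₀), inv_pow]
        field_simp

lemma ofReal_P_mul_volume_le_of_mem_dyadicShell (n : ℕ) {x₀ : ℝ} (hx₀ : 0 < x₀)
    {x z : EuclideanSpace ℝ (Fin n)} {k : ℕ} (hz : z ∈ dyadicShell x x₀ k) :
    ENNReal.ofReal (P n x₀ (x - z)) * volume (ball x (2 ^ k * x₀)) ≤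
      ENNReal.ofReal (2 ^ (n + 1) / sigma n) * volume (ball (0 : EuclideanSpace ℝ (Fin n)) 1) *
        2⁻¹ ^ k := by
  have := sigma_pos n
  rw [Measure.addHaar_ball_of_pos volume x (by positivity), finrank_euclideanSpace_fin,
    ← mul_assoc, ← ENNReal.ofReal_mul (P_nonneg n hx₀.le _)]
  have h2 : (2⁻¹ : ℝ≥0∞) ^ k = ENNReal.ofReal (2⁻¹ ^ k) := by
    rw [ENNReal.ofReal_pow (by norm_num), ENNReal.ofReal_inv_of_pos two_pos, ENNReal.ofReal_ofNat]
  rw [h2, mul_right_comm, ← ENNReal.ofReal_mul (by positivity)]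
  gcongr ?_ * _
  exact ENNReal.ofReal_le_ofReal (P_mul_pow_le_of_mem_dyadicShell n hx₀ hz)

lemma ofReal_abs_integral_mul_le_lintegral {Ω : Type*} [MeasurableSpace Ω] {μ : Measure Ω}
    {φ g : Ω → ℝ} (hφ : ∀ z, 0 ≤ φ z) :
    ENNReal.ofReal |∫ z, φ z * g z ∂μ| ≤ ∫⁻ z, ENNReal.ofReal (φ z) * ENNReal.ofReal |g z| ∂μ := by
  rw [← Real.enorm_eq_ofReal_abs]
  refine (enorm_integral_le_lintegral_enorm _).trans_eq (lintegral_congr fun z => ?_)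
  rw [Real.enorm_eq_ofReal_abs, abs_mul, abs_of_nonneg (hφ z), ENNReal.ofReal_mul (hφ z)]

theorem nontangential_maximal_bound_general (n : ℕ) (α : ℝ) (f : EuclideanSpace ℝ (Fin n) → ℝ) :
    ∃ A : ℝ, 0 < A ∧
      ∀ x : EuclideanSpace ℝ (Fin n), ∀ y : EuclideanSpace ℝ (Fin n), ∀ x₀ : ℝ,
        0 < x₀ → ‖y - x‖ < α * x₀ →
        ENNReal.ofReal |∫ z : EuclideanSpace ℝ (Fin n), P n x₀ (y - z) * f z| ≤
          ENNReal.ofReal A * HLmax f x := by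
  set K : ℝ := (2 + 2 * α ^ 2) ^ (((n : ℝ) + 1) / 2)
  have hK : 0 < K := rpow_pos_of_pos (by positivity) _
  set C : ℝ≥0∞ := ENNReal.ofReal (2 ^ (n + 1) / sigma n) *
    volume (ball (0 : EuclideanSpace ℝ (Fin n)) 1)
  have hC : C ≠ ∞ := ENNReal.mul_ne_top ENNReal.ofReal_ne_top measure_ball_lt_top.ne
  have hC0 : C ≠ 0 :=
    mul_ne_zero (ENNReal.ofReal_pos.2 (div_pos (by positivity) (sigma_pos n))).ne'
      (measure_ball_pos volume _ one_pos).ne'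
  have h2C : 2 * C ≠ ∞ := ENNReal.mul_ne_top (by simp) hC
  refine ⟨K * (2 * C).toReal, mul_pos hK (ENNReal.toReal_pos (by simpa using hC0) h2C),
    fun x y x₀ hx₀ hxy => ?_⟩
  calc ENNReal.ofReal |∫ z, P n x₀ (y - z) * f z|
      ≤ ∫⁻ z, ENNReal.ofReal (P n x₀ (y - z)) * ENNReal.ofReal |f z| :=
        ofReal_abs_integral_mul_le_lintegral fun z => P_nonneg n hx₀.le _
    _ ≤ ∫⁻ z, ENNReal.ofReal K * (ENNReal.ofReal (P n x₀ (x - z)) * ENNReal.ofReal |f z|) :=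
        lintegral_mono fun z => by
          rw [← mul_assoc, ← ENNReal.ofReal_mul hK.le]
          gcongr
          exact P_sub_le_mul_P_sub n hx₀ α hxy.le z
    _ = ENNReal.ofReal K * ∫⁻ z, ENNReal.ofReal (P n x₀ (x - z)) * ENNReal.ofReal |f z| :=
        lintegral_const_mul' _ _ ENNReal.ofReal_ne_top
    _ ≤ ENNReal.ofReal K * (2 * C * HLmax f x) := by
        gcongr
        exact lintegral_mul_le_HLmax_of_dyadicShell_bound f x hx₀ _ hC
          fun k z hz => ofReal_P_mul_volume_le_of_mem_dyadicShell n hx₀ hz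
    _ = ENNReal.ofReal (K * (2 * C).toReal) * HLmax f x := by
        rw [ENNReal.ofReal_mul hK.le, ENNReal.ofReal_toReal h2C]
        ring

/-- for f ∈ Lᵖ(ℝⁿ), 1 ≤ p ≤ ∞, the Poisson integral
u(y̲, x₀) = (P_{x₀} * f)(y̲) satisfies the nontangential maximal bound
u*(x̲) = sup_{|y̲-x̲|<αx₀} |u(y̲,x₀)| ≤ A·M(f)(x̲), with A = A(n, α). -/
theorem nontangential_maximal_bound (n : ℕ) (p : ENNReal) (hp : 1 ≤ p)
    (α : ℝ) (hα : 0 < α)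
    (f : EuclideanSpace ℝ (Fin n) → ℝ) (hf : MemLp f p volume) :
    ∃ A : ℝ, 0 < A ∧
      ∀ x : EuclideanSpace ℝ (Fin n), ∀ y : EuclideanSpace ℝ (Fin n), ∀ x₀ : ℝ,
        0 < x₀ → ‖y - x‖ < α * x₀ →
        ENNReal.ofReal |∫ z : EuclideanSpace ℝ (Fin n), P n x₀ (y - z) * f z| ≤
          ENNReal.ofReal A * HLmax f x :=
  nontangential_maximal_bound_general n α f
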